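/- arXiv:2411.00070 — 7 statements merged into one kernel-verified Lean document; each statement's English description precedes it below -/
import Mathlib

section
/- If α(1-ω) = γ, then the only equilibrium point of the system in U is the origin (0,0,0,0). -/
theorem stmt4 (α β γ κ ε εp ω : ℝ)
    (hα : 0 < α) (hβ : 0 < β) (hγ : 0 < γ) (hκ : 0 < κ) (hε : 0 < ε) (hεp : 0 < εp)
    (hω0 : 0 < ω) (hω1 : ω < 1)
    (hcrit : α * (1 - ω) = γ)
    (V S D p : ℝ) (hV : 0 ≤ V) (hS : 0 ≤ S) (hD : 0 ≤ D)
    (hp0 : 0 ≤ p) (hp1 : p ≤ 1) (hsum : V + S + D ≤ 1)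
    (heqV : α * (1 - ω) * V * p * (1 - V - S - D) - ε * V = 0)
    (heqS : β * S * p * (1 - V - S - D) - ε * S = 0)
    (heqD : (ω * α * V + γ * D) * p * (1 - V - S - D) - ε * D = 0)
    (heqp : κ * V * (1 - p) - εp * p = 0) :
    V = 0 ∧ S = 0 ∧ D = 0 ∧ p = 0 := by
  have hV0 : V = 0 := by
    by_contra h
    have hVpos : 0 < V := lt_of_le_of_ne hV (Ne.symm h)
    have key : α * (1 - ω) * p * (1 - V - S - D) = ε := by
      have h2 : (α * (1 - ω) * p * (1 - V - S - D) - ε) * V = 0 := by linarith [heqV]; 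
      rcases mul_eq_zero.mp h2 with h3 | h3
      · linarith
      · exact absurd h3 h
    have hαω : 0 < α * (1 - ω) := mul_pos hα (by linarith)
    have hpΩ : 0 < p * (1 - V - S - D) := by nlinarith
    have hγ' : γ * (p * (1 - V - S - D)) = ε := by
      rw [← hcrit]; linear_combination key
    have hzero : ω * α * V * (p * (1 - V - S - D)) = 0 := by
      linear_combination heqD - D * hγ'
    nlinarith [mul_pos (mul_pos (mul_pos hω0 hα) hVpos) hpΩ]
  subst hV0
  have hp : p = 0 := by
    have : εp * p = 0 := by linarith [heqp]
    exact (mul_eq_zero.mp this).resolve_left (ne_of_gt hεp)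
  subst hp
  have hS0 : S = 0 := by
    have : ε * S = 0 := by linarith [heqS]
    exact (mul_eq_zero.mp this).resolve_left (ne_of_gt hε)
  have hD0 : D = 0 := by
    have : ε * D = 0 := by linarith [heqD]
    exact (mul_eq_zero.mp this).resolve_left (ne_of_gt hε)
  exact ⟨rfl, hS0, hD0, rfl⟩
end

section
/- A necessary condition for the existence of an equilibrium Q₁ = (V₁, 0, D₁, p₁) of the system with V₁ > 0 in the interior-compatible region (0 < p₁ < 1, 0 < Ω < 1, D₁ > 0) is α(1-ω) > max{γ, ε}. -/
theorem stmt6 (α β γ κ ε εp ω : ℝ)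
    (hα : 0 < α) (hβ : 0 < β) (hγ : 0 < γ) (hκ : 0 < κ) (hε : 0 < ε) (hεp : 0 < εp)
    (hω0 : 0 < ω) (hω1 : ω < 1)
    (V₁ D₁ p₁ : ℝ) (hV₁ : 0 < V₁) (hD₁ : 0 < D₁)
    (hp₁0 : 0 < p₁) (hp₁1 : p₁ < 1)
    (hΩ0 : 0 < 1 - V₁ - 0 - D₁) (hΩ1 : 1 - V₁ - 0 - D₁ < 1)
    (heqV : α * (1 - ω) * V₁ * p₁ * (1 - V₁ - 0 - D₁) - ε * V₁ = 0)
    (heqS : β * 0 * p₁ * (1 - V₁ - 0 - D₁) - ε * 0 = 0)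
    (heqD : (ω * α * V₁ + γ * D₁) * p₁ * (1 - V₁ - 0 - D₁) - ε * D₁ = 0)
    (heqp : κ * V₁ * (1 - p₁) - εp * p₁ = 0) :
    α * (1 - ω) > max γ ε := by
  set Ω := 1 - V₁ - 0 - D₁ with hΩ
  have hx0 : 0 < p₁ * Ω := mul_pos hp₁0 hΩ0
  have hx1 : p₁ * Ω < 1 := by nlinarith
  -- α(1-ω) * (p₁Ω) = ε
  have hkey : α * (1 - ω) * (p₁ * Ω) = ε :=
    mul_right_cancel₀ (ne_of_gt hV₁)
      (show α * (1 - ω) * (p₁ * Ω) * V₁ = ε * V₁ by nlinarith)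
  have hε' : α * (1 - ω) > ε := by nlinarith
  have hγ' : α * (1 - ω) > γ := by
    -- from heqD: (ωαV₁ + γD₁)(p₁Ω) = εD₁ = α(1-ω)(p₁Ω)D₁
    have h2 : (ω * α * V₁ + γ * D₁) * (p₁ * Ω) = α * (1 - ω) * (p₁ * Ω) * D₁ := by
      nlinarith
    have h3 : ω * α * V₁ + γ * D₁ = α * (1 - ω) * D₁ := by
      have := mul_right_cancel₀ (ne_of_gt hx0) (by nlinarith : (ω * α * V₁ + γ * D₁) * (p₁ * Ω) = (α * (1 - ω) * D₁) * (p₁ * Ω))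
      exact this
    nlinarith [mul_pos (mul_pos hω0 hα) hV₁]
  exact max_lt hγ' hε'
end

section
/- If Q₂ = (V₂, S₂, D₂, p₂) is an equilibrium of the system with V₂ > 0 and S₂ > 0 and 0 < p₂, 0 < Ω₂ (interior equilibrium), then necessarily α(1-ω) = β; moreover D₂ > 0 forces β > γ, and then D₂ = βω V₂/((β-γ)(1-ω)). -/
section Equilibrium

variable {R : Type*} [CommRing R] [IsDomain R] {a b γ ε X V D p Ω : R}

theorem rate_mul_eq_decay_of_equilibrium (hX : X ≠ 0)
    (h : a * X * p * Ω - ε * X = 0) : a * (p * Ω) = ε :=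
  mul_right_cancel₀ hX (by linear_combination h)

theorem inflow_eq_of_equilibrium (hpΩ : p * Ω ≠ 0) (hb : b * (p * Ω) = ε)
    (h : (a * V + γ * D) * p * Ω - ε * D = 0) : a * V = (b - γ) * D :=
  mul_right_cancel₀ hpΩ (by linear_combination h - D * hb)

end Equilibrium

theorem stmt8_general (α β γ ε ω : ℝ)
    (hα : 0 < α) (hω0 : 0 < ω) (hω1 : ω < 1)
    (V₂ S₂ D₂ p₂ : ℝ) (hV₂ : 0 < V₂) (hS₂ : 0 < S₂) (hD₂ : 0 < D₂)
    (hp₂ : 0 < p₂) (hΩ : 0 < 1 - V₂ - S₂ - D₂)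
    (heqV : α * (1 - ω) * V₂ * p₂ * (1 - V₂ - S₂ - D₂) - ε * V₂ = 0)
    (heqS : β * S₂ * p₂ * (1 - V₂ - S₂ - D₂) - ε * S₂ = 0)
    (heqD : (ω * α * V₂ + γ * D₂) * p₂ * (1 - V₂ - S₂ - D₂) - ε * D₂ = 0) :
    α * (1 - ω) = β ∧ γ < β ∧ D₂ = β * ω * V₂ / ((β - γ) * (1 - ω)) := by
  have hpΩ : p₂ * (1 - V₂ - S₂ - D₂) ≠ 0 := (mul_pos hp₂ hΩ).ne'
  have hS := rate_mul_eq_decay_of_equilibrium hS₂.ne' heqS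
  have hV := rate_mul_eq_decay_of_equilibrium hV₂.ne' heqV
  have hab : α * (1 - ω) = β := mul_right_cancel₀ hpΩ (hV.trans hS.symm)
  have hD : ω * α * V₂ = (β - γ) * D₂ := inflow_eq_of_equilibrium hpΩ hS heqD
  have hβγ : γ < β := by
    have : 0 < (β - γ) * D₂ := hD ▸ by positivity
    exact sub_pos.1 (pos_of_mul_pos_left this hD₂.le)
  refine ⟨hab, hβγ, ?_⟩
  have hden : (β - γ) * (1 - ω) ≠ 0 := (mul_pos (sub_pos.2 hβγ) (sub_pos.2 hω1)).ne'
  rw [eq_div_iff hden]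
  linear_combination ω * V₂ * hab - (1 - ω) * hD

theorem stmt8 (α β γ κ ε εp ω : ℝ)
    (hα : 0 < α) (hβ : 0 < β) (hγ : 0 < γ) (hκ : 0 < κ) (hε : 0 < ε) (hεp : 0 < εp)
    (hω0 : 0 < ω) (hω1 : ω < 1)
    (V₂ S₂ D₂ p₂ : ℝ) (hV₂ : 0 < V₂) (hS₂ : 0 < S₂) (hD₂ : 0 < D₂)
    (hp₂ : 0 < p₂) (hΩ : 0 < 1 - V₂ - S₂ - D₂)
    (heqV : α * (1 - ω) * V₂ * p₂ * (1 - V₂ - S₂ - D₂) - ε * V₂ = 0)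
    (heqS : β * S₂ * p₂ * (1 - V₂ - S₂ - D₂) - ε * S₂ = 0)
    (heqD : (ω * α * V₂ + γ * D₂) * p₂ * (1 - V₂ - S₂ - D₂) - ε * D₂ = 0)
    (heqp : κ * V₂ * (1 - p₂) - εp * p₂ = 0) :
    α * (1 - ω) = β ∧ γ < β ∧ D₂ = β * ω * V₂ / ((β - γ) * (1 - ω)) :=
  stmt8_general α β γ ε ω hα hω0 hω1 V₂ S₂ D₂ p₂ hV₂ hS₂ hD₂ hp₂ hΩ heqV heqS heqD
end

section
/- Assume α(1-ω) = β and β > γ. Then the plane Π = {D = βω V/((β-γ)(1-ω))} is invariant for the flow: if H(V,D) = D - βω V/((β-γ)(1-ω)), then along solutions with H = 0 one has dH/dt = 0 (i.e., D' - (βω/((β-γ)(1-ω)))V' vanishes identically on Π). -/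
theorem stmt9 (α β γ ω ε : ℝ)
    (hα : 0 < α) (hβ : 0 < β) (hγ : 0 < γ) (hε : 0 < ε)
    (hω0 : 0 < ω) (hω1 : ω < 1)
    (hαβ : α * (1 - ω) = β) (hβγ : γ < β) :
    ∀ V S p : ℝ,
      let m := β * ω / ((β - γ) * (1 - ω))
      let D := m * V
      let Ω := 1 - V - S - D
      ((ω * α * V + γ * D) * p * Ω - ε * D) - m * (α * (1 - ω) * V * p * Ω - ε * V) = 0 := by
  intro V S p
  simp only
  have h1 : β - γ ≠ 0 := by linarith
  have h2 : (1 : ℝ) - ω ≠ 0 := by linarith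
  have hα' : α = β / (1 - ω) := by field_simp; linarith
  subst hα'
  field_simp
  ring
end

section
/- (Scaling law for transients, μ < 0.) Let α < α* where α*(1-ω) = β, set μ = α - α* < 0. Suppose a solution satisfies ε/β < p(t)Ω(x(t)) < ε/(α(1-ω)) for all t ∈ (τ₀, τ₁), with S(τ₀), S(τ₁), V(τ₀), V(τ₁) > 0. Then both log(S(τ₁)/S(τ₀)) and log(V(τ₀)/V(τ₁)) lie in (0, (ε/α)|μ|(τ₁-τ₀)·(1/1)), and consequently τ₁ - τ₀ > (α/ε)·K̃/|μ|, where K̃ = max{log(V(τ₀)/V(τ₁)), log(S(τ₁)/S(τ₀))} > 0. -/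
/-!
Along the transient both `log S` and `log V` move with rates `βpΩ - ε` and `α(1-ω)pΩ - ε`, and
the band `ε/β < pΩ < ε/(α(1-ω))` pins these rates to `(0, (ε/α)|μ|)` and `(-(ε/α)|μ|, 0)`.
The mean value theorem turns the rate bounds into the bounds on the two log-ratios, and the
time bound is the larger of them divided by the maximal rate `(ε/α)|μ|`.
-/

open Real Set

theorem log_div_mem_Ioo_of_hasDerivAt_mul {f r : ℝ → ℝ} {a b lo hi : ℝ} (hab : a < b)
    (hf : ∀ t ∈ Icc a b, HasDerivAt f (r t * f t) t) (hpos : ∀ t ∈ Icc a b, 0 < f t)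
    (hr : ∀ t ∈ Ioo a b, lo < r t ∧ r t < hi) :
    log (f b / f a) ∈ Ioo (lo * (b - a)) (hi * (b - a)) := by
  have hlog : ∀ t ∈ Icc a b, HasDerivAt (fun s => log (f s)) (r t) t := fun t ht => by
    simpa [(hpos t ht).ne'] using (hf t ht).log (hpos t ht).ne'
  obtain ⟨c, hc, hslope⟩ := exists_hasDerivAt_eq_slope (fun s => log (f s)) r hab
    (fun t ht => (hlog t ht).continuousAt.continuousWithinAt)
    (fun t ht => hlog t (Ioo_subset_Icc_self ht))
  have hlen : 0 < b - a := sub_pos.mpr hab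
  have heq : log (f b / f a) = r c * (b - a) := by
    rw [log_div (hpos b (right_mem_Icc.mpr hab.le)).ne' (hpos a (left_mem_Icc.mpr hab.le)).ne',
      hslope, div_mul_cancel₀ _ hlen.ne']
  rw [heq]
  exact ⟨mul_lt_mul_of_pos_right (hr c hc).1 hlen, mul_lt_mul_of_pos_right (hr c hc).2 hlen⟩

section Band

variable {a b ε x : ℝ} (ha : 0 < a) (hab : a < b)
  (hlo : ε / b < x) (hhi : x < ε / a)
include ha hab hlo hhi

theorem rate_mem_Ioo_of_mem_band_upper : b * x - ε ∈ Ioo 0 (ε * (b - a) / a) := by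
  have hb : 0 < b := ha.trans hab
  rw [div_lt_iff₀ hb] at hlo
  rw [lt_div_iff₀ ha] at hhi
  constructor
  · linarith
  · rw [lt_div_iff₀ ha]; nlinarith

theorem rate_mem_Ioo_of_mem_band_lower : a * x - ε ∈ Ioo (-(ε * (b - a) / a)) 0 := by
  have hb : 0 < b := ha.trans hab
  rw [div_lt_iff₀ hb] at hlo
  rw [lt_div_iff₀ ha] at hhi
  constructor
  · rw [neg_lt, lt_div_iff₀ ha]; nlinarith
  · linarith

end Band

theorem stmt12_general (α β ε ω : ℝ)
    (hα : 0 < α) (hε : 0 < ε) (hω1 : ω < 1)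
    (hμ : α - β / (1 - ω) < 0)
    (V S D p : ℝ → ℝ)
    (hV : ∀ t, HasDerivAt V (α * (1 - ω) * V t * p t * (1 - V t - S t - D t) - ε * V t) t)
    (hS : ∀ t, HasDerivAt S (β * S t * p t * (1 - V t - S t - D t) - ε * S t) t)
    (τ₀ τ₁ : ℝ) (hττ : τ₀ < τ₁)
    (hpos : ∀ t ∈ Set.Icc τ₀ τ₁, 0 < V t ∧ 0 < S t)
    (hband : ∀ t ∈ Set.Ioo τ₀ τ₁,
      ε / β < p t * (1 - V t - S t - D t) ∧
      p t * (1 - V t - S t - D t) < ε / (α * (1 - ω))) :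
    (0 < Real.log (S τ₁ / S τ₀) ∧
      Real.log (S τ₁ / S τ₀) < ε / α * |α - β / (1 - ω)| * (τ₁ - τ₀)) ∧
    (0 < Real.log (V τ₀ / V τ₁) ∧
      Real.log (V τ₀ / V τ₁) < ε / α * |α - β / (1 - ω)| * (τ₁ - τ₀)) ∧
    τ₁ - τ₀ > α / ε * max (Real.log (V τ₀ / V τ₁)) (Real.log (S τ₁ / S τ₀)) /
      |α - β / (1 - ω)| := by
  have hω : 0 < 1 - ω := sub_pos.mpr hω1
  have ha : 0 < α * (1 - ω) := mul_pos hα hω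
  have hab : α * (1 - ω) < β := by rwa [sub_neg, lt_div_iff₀ hω] at hμ
  have hrate : ε / α * |α - β / (1 - ω)| = ε * (β - α * (1 - ω)) / (α * (1 - ω)) := by
    rw [abs_of_neg hμ]; field_simp; ring
  set Ω := fun t => p t * (1 - V t - S t - D t)
  have hSlog := log_div_mem_Ioo_of_hasDerivAt_mul (r := fun t => β * Ω t - ε) hττ
    (fun t _ => (hS t).congr_deriv (by ring)) (fun t ht => (hpos t ht).2)
    (fun t ht => rate_mem_Ioo_of_mem_band_upper ha hab (hband t ht).1 (hband t ht).2)
  have hVlog := log_div_mem_Ioo_of_hasDerivAt_mul (r := fun t => α * (1 - ω) * Ω t - ε) hττ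
    (fun t _ => (hV t).congr_deriv (by ring)) (fun t ht => (hpos t ht).1)
    (fun t ht => rate_mem_Ioo_of_mem_band_lower ha hab (hband t ht).1 (hband t ht).2)
  rw [← hrate, zero_mul] at hSlog hVlog
  have hVlog' : log (V τ₀ / V τ₁) ∈ Ioo 0 (ε / α * |α - β / (1 - ω)| * (τ₁ - τ₀)) := by
    rw [← inv_div (V τ₁), log_inv]; constructor <;> linarith [hVlog.1, hVlog.2]
  refine ⟨hSlog, hVlog', ?_⟩
  have hmax := max_lt hVlog'.2 hSlog.2
  rw [gt_iff_lt, div_lt_iff₀ (abs_pos.mpr hμ.ne), ← lt_div_iff₀' (div_pos hα hε)]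
  convert hmax using 1
  field_simp

theorem stmt12 (α β γ κ ε εp ω : ℝ)
    (hα : 0 < α) (hβ : 0 < β) (hε : 0 < ε) (hω0 : 0 < ω) (hω1 : ω < 1)
    (hμ : α - β / (1 - ω) < 0)
    (V S D p : ℝ → ℝ)
    (hV : ∀ t, HasDerivAt V (α * (1 - ω) * V t * p t * (1 - V t - S t - D t) - ε * V t) t)
    (hS : ∀ t, HasDerivAt S (β * S t * p t * (1 - V t - S t - D t) - ε * S t) t)
    (τ₀ τ₁ : ℝ) (hττ : τ₀ < τ₁)
    (hpos : ∀ t ∈ Set.Icc τ₀ τ₁, 0 < V t ∧ 0 < S t)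
    (hband : ∀ t ∈ Set.Ioo τ₀ τ₁,
      ε / β < p t * (1 - V t - S t - D t) ∧
      p t * (1 - V t - S t - D t) < ε / (α * (1 - ω))) :
    (0 < Real.log (S τ₁ / S τ₀) ∧
      Real.log (S τ₁ / S τ₀) < ε / α * |α - β / (1 - ω)| * (τ₁ - τ₀)) ∧
    (0 < Real.log (V τ₀ / V τ₁) ∧
      Real.log (V τ₀ / V τ₁) < ε / α * |α - β / (1 - ω)| * (τ₁ - τ₀)) ∧
    τ₁ - τ₀ > α / ε * max (Real.log (V τ₀ / V τ₁)) (Real.log (S τ₁ / S τ₀)) /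
      |α - β / (1 - ω)| :=
  stmt12_general α β ε ω hα hε hω1 hμ V S D p hV hS τ₀ τ₁ hττ hpos hband
end

section
/- Assume α(1-ω) = β with β > γ, and fix c > 0. Then in the (V,S,D)-space the line σ_c = {(V, cV, mV) : V > 0} with m = βω/((β-γ)(1-ω)), i.e., the intersection of the planes S = cV and D = mV, is invariant under the flow: if a solution starts with S(0) = cV(0) and D(0) = mV(0) then S(t) = cV(t) and D(t) = mV(t) for all t where the solution exists (given V(t) > 0). -/
/-!
Along any solution, `S - cV` and `D - mV` satisfy scalar linear equations `u' = h(t) u` with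
continuous coefficients (`h = βpΩ - ε` and `h = γpΩ - ε`); for `D - mV` the source term
`(ωα + γm - βm) V pΩ` vanishes exactly because `m (β - γ) = ωα`. A solution of `u' = h u` is
`u(0) exp (∫₀ᵗ h)`, so both differences stay zero once they start at zero.
-/

open Real

theorem eq_exp_integral_mul_of_hasDerivAt {h u : ℝ → ℝ} (hh : Continuous h)
    (hu : ∀ t, HasDerivAt u (h t * u t) t) (t : ℝ) :
    u t = exp (∫ s in (0 : ℝ)..t, h s) * u 0 := by
  set A : ℝ → ℝ := fun t => ∫ s in (0 : ℝ)..t, h s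
  have hA : ∀ t, HasDerivAt A (h t) t := fun t => (hh.integral_hasStrictDerivAt 0 t).hasDerivAt
  have hconst : ∀ t, HasDerivAt (fun t => exp (-A t) * u t) 0 t := fun t =>
    ((hA t).neg.exp.mul (hu t)).congr_deriv (by ring)
  have hg : exp (-A t) * u t = exp (-A 0) * u 0 :=
    is_const_of_deriv_eq_zero (fun x => (hconst x).differentiableAt) (fun x => (hconst x).deriv) t 0
  simp only [A, intervalIntegral.integral_same, neg_zero, exp_zero, one_mul] at hg
  rw [← hg, ← mul_assoc, ← exp_add, add_neg_cancel, exp_zero, one_mul]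

theorem eq_zero_of_hasDerivAt_mul_self {h u : ℝ → ℝ} (hh : Continuous h)
    (hu : ∀ t, HasDerivAt u (h t * u t) t) (h0 : u 0 = 0) (t : ℝ) : u t = 0 := by
  rw [eq_exp_integral_mul_of_hasDerivAt hh hu, h0, mul_zero]

theorem stmt13_general (α β γ κ ε εp ω c : ℝ)
    (hω1 : ω < 1) (hαβ : α * (1 - ω) = β) (hβγ : γ < β)
    (V S D p : ℝ → ℝ)
    (hV : ∀ t, HasDerivAt V (α * (1 - ω) * V t * p t * (1 - V t - S t - D t) - ε * V t) t)
    (hS : ∀ t, HasDerivAt S (β * S t * p t * (1 - V t - S t - D t) - ε * S t) t)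
    (hD : ∀ t, HasDerivAt D
      ((ω * α * V t + γ * D t) * p t * (1 - V t - S t - D t) - ε * D t) t)
    (hp : ∀ t, HasDerivAt p (κ * V t * (1 - p t) - εp * p t) t)
    (hS0 : S 0 = c * V 0)
    (hD0 : D 0 = β * ω / ((β - γ) * (1 - ω)) * V 0) :
    ∀ t, S t = c * V t ∧ D t = β * ω / ((β - γ) * (1 - ω)) * V t := by
  set m := β * ω / ((β - γ) * (1 - ω))
  have hm : m * (β - γ) = ω * α := by
    have hβγ' : β - γ ≠ 0 := by linarith
    have hω' : 1 - ω ≠ 0 := by linarith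
    calc m * (β - γ) = β * ω / (1 - ω) := by simp only [m]; field_simp
      _ = ω * α := by rw [← hαβ]; field_simp
  clear_value m
  have hcont : ∀ {f : ℝ → ℝ} {f' : ℝ → ℝ}, (∀ t, HasDerivAt f (f' t) t) → Continuous f :=
    fun hf => continuous_iff_continuousAt.2 fun t => (hf t).continuousAt
  set q : ℝ → ℝ := fun t => p t * (1 - V t - S t - D t)
  have hq : Continuous q := by
    have := hcont hV; have := hcont hS; have := hcont hD; have := hcont hp; fun_prop
  have hSV : ∀ t, S t - c * V t = 0 :=
    eq_zero_of_hasDerivAt_mul_self (h := fun t => β * q t - ε) (by fun_prop)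
      (fun t => ((hS t).sub ((hV t).const_mul c)).congr_deriv (by rw [hαβ]; ring))
      (by rw [hS0, sub_self])
  have hDV : ∀ t, D t - m * V t = 0 :=
    eq_zero_of_hasDerivAt_mul_self (h := fun t => γ * q t - ε) (by fun_prop)
      (fun t => ((hD t).sub ((hV t).const_mul m)).congr_deriv
        (by linear_combination -V t * q t * (m * hαβ + hm)))
      (by rw [hD0, sub_self])
  exact fun t => ⟨sub_eq_zero.1 (hSV t), sub_eq_zero.1 (hDV t)⟩

theorem stmt13 (α β γ κ ε εp ω c : ℝ)
    (hα : 0 < α) (hβ : 0 < β) (hγ : 0 < γ) (hκ : 0 < κ) (hε : 0 < ε) (hεp : 0 < εp)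
    (hω0 : 0 < ω) (hω1 : ω < 1) (hαβ : α * (1 - ω) = β) (hβγ : γ < β) (hc : 0 < c)
    (V S D p : ℝ → ℝ)
    (hV : ∀ t, HasDerivAt V (α * (1 - ω) * V t * p t * (1 - V t - S t - D t) - ε * V t) t)
    (hS : ∀ t, HasDerivAt S (β * S t * p t * (1 - V t - S t - D t) - ε * S t) t)
    (hD : ∀ t, HasDerivAt D
      ((ω * α * V t + γ * D t) * p t * (1 - V t - S t - D t) - ε * D t) t)
    (hp : ∀ t, HasDerivAt p (κ * V t * (1 - p t) - εp * p t) t)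
    (hVpos : ∀ t, 0 < V t)
    (hS0 : S 0 = c * V 0)
    (hD0 : D 0 = β * ω / ((β - γ) * (1 - ω)) * V 0) :
    ∀ t, S t = c * V t ∧ D t = β * ω / ((β - γ) * (1 - ω)) * V t :=
  stmt13_general α β γ κ ε εp ω c hω1 hαβ hβγ V S D p hV hS hD hp hS0 hD0
end

section
/- Under μ < 0 (i.e., β > α(1-ω)), if a solution with S(t) > 0, V(t) > 0 for all t satisfies p(t)Ω(x(t)) → ε/(α(1-ω)) as t → ∞, then there exists t₁ such that S'(t) > 0 for all t > t₁; in particular S(t) cannot converge to 0, so no such solution has a satellite-free equilibrium Q₁ (with V₁ > 0) as its limit. -/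
open Filter

theorem stmt18 (α β ε ω : ℝ)
    (hα : 0 < α) (hβ : 0 < β) (hε : 0 < ε) (hω0 : 0 < ω) (hω1 : ω < 1)
    (hμ : α * (1 - ω) < β)
    (V S D p : ℝ → ℝ)
    (hS : ∀ t, HasDerivAt S (S t * (β * (p t * (1 - V t - S t - D t)) - ε)) t)
    (hSpos : ∀ t, 0 < S t) (hVpos : ∀ t, 0 < V t)
    (hlim : Tendsto (fun t => p t * (1 - V t - S t - D t)) atTop
      (nhds (ε / (α * (1 - ω))))) :
    (∃ t₁ : ℝ, ∀ t > t₁, 0 < S t * (β * (p t * (1 - V t - S t - D t)) - ε)) ∧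
    ¬ Tendsto S atTop (nhds 0) := by
  have hden : 0 < α * (1 - ω) := by nlinarith
  have hlt : ε / β < ε / (α * (1 - ω)) := by
    apply div_lt_div_of_pos_left hε hden hμ
  have hev : ∀ᶠ t in atTop, ε / β < p t * (1 - V t - S t - D t) :=
    hlim.eventually (eventually_gt_nhds hlt)
  obtain ⟨t₀, ht₀⟩ := eventually_atTop.1 hev
  have key : ∀ t > t₀, 0 < S t * (β * (p t * (1 - V t - S t - D t)) - ε) := by
    intro t ht
    have h1 := ht₀ t ht.le
    have h2 : ε < β * (p t * (1 - V t - S t - D t)) := by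
      rw [div_lt_iff₀ hβ] at h1; nlinarith
    exact mul_pos (hSpos t) (by linarith)
  refine ⟨⟨t₀, key⟩, ?_⟩
  intro hS0
  set a := t₀ + 1 with ha
  have hmono : StrictMonoOn S (Set.Ici a) := by
    apply strictMonoOn_of_deriv_pos (convex_Ici a) (fun t _ => (hS t).continuousAt.continuousWithinAt)
    intro t ht
    rw [interior_Ici] at ht
    rw [(hS t).deriv]
    exact key t (by simp only [Set.mem_Ioi] at ht; linarith)
  have hge : ∀ᶠ t in atTop, S a ≤ S t := by
    filter_upwards [eventually_ge_atTop a] with t ht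
    rcases eq_or_lt_of_le ht with h | h
    · rw [h]
    · exact (hmono Set.self_mem_Ici (Set.mem_Ici.2 ht) h).le
  have := ge_of_tendsto hS0 hge
  exact absurd this (not_le.2 (hSpos a))
end
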